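/- Let $N \ge 3$, $\nu = \frac{N-2}{2}$, and let $\alpha(t) = A_\nu\sqrt{t}\,J_\nu(2\nu t^{-1/(2\nu)})$ with $A_\nu = \nu^{-\nu}\Gamma(\nu+1)$. If $\tau > 0$ is a zero of $\alpha$, then the radial function $\varphi(x) := \alpha(\tau |x|^{-(N-2)})$ defined on the unit ball $B_1 \subset \mathbb{R}^N$ satisfies $-\Delta \varphi = \mu \varphi$ in $B_1 \setminus \{0\}$ with $\mu = (N-2)^2 \tau^{-2/(N-2)}$, and $\varphi = 0$ on $\partial B_1$. -/

import Mathlib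

/-!
Put `ν = (N - 2) / 2`. Expanding `J_ν` in its power series gives `φ(y) = G(‖y‖²)` for `y ≠ 0`,
where `G(v) = ∑ aⱼ vʲ` with `aⱼ = Γ(ν + 1) (-μ/4)ʲ / (j! Γ(j + ν + 1))` is an entire power series.
The recursion `(j + 1)(j + ν + 1) aⱼ₊₁ = -(μ/4) aⱼ` is the equation `4vG'' + 2N G' + μG = 0`
read off coefficientwise, and the Laplacian of `y ↦ G(‖y‖²)` is `4‖y‖² G''(‖y‖²) + 2N G'(‖y‖²)`.
On the unit sphere `φ = α(τ) = 0`.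
-/

open Real Set Filter Metric

/-- The Bessel function of the first kind of order `ν`, defined by its power series. -/
noncomputable def besselJ (ν : ℝ) (s : ℝ) : ℝ :=
  ∑' j : ℕ, (-1 : ℝ) ^ j / (Real.Gamma ((j : ℝ) + 1) * Real.Gamma ((j : ℝ) + ν + 1)) *
    (s / 2) ^ (ν + 2 * (j : ℝ))

/-- The function `α(t) = A_ν √t J_ν(2ν t^{-1/(2ν)})` with `A_ν = ν^{-ν} Γ(ν+1)`,
`ν = (N-2)/2`. -/
noncomputable def alphaFun (N : ℕ) (t : ℝ) : ℝ :=
  (((N : ℝ) - 2) / 2) ^ (-(((N : ℝ) - 2) / 2)) * Real.Gamma (((N : ℝ) - 2) / 2 + 1) *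
    Real.sqrt t *
    besselJ (((N : ℝ) - 2) / 2) (2 * (((N : ℝ) - 2) / 2) * t ^ (-(1 / (2 * (((N : ℝ) - 2) / 2)))))

/-- The Laplacian of `f : ℝ^N → ℝ`, as the sum of the second derivatives along the
coordinate directions. -/
noncomputable def lap {N : ℕ} (f : EuclideanSpace ℝ (Fin N) → ℝ)
    (x : EuclideanSpace ℝ (Fin N)) : ℝ :=
  ∑ i : Fin N, iteratedDeriv 2 (fun s : ℝ => f (x + s • EuclideanSpace.single i 1)) 0

open Topology

noncomputable def powSeries (a : ℕ → ℝ) (v : ℝ) : ℝ := ∑' j : ℕ, a j * v ^ j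

def derivCoeff (a : ℕ → ℝ) (j : ℕ) : ℝ := ((j : ℝ) + 1) * a (j + 1)

theorem summable_of_norm_succ_le_div {E : Type*} [NormedAddCommGroup E] [CompleteSpace E]
    {f : ℕ → E} (M : ℝ) (h : ∀ j : ℕ, ‖f (j + 1)‖ ≤ M / ((j : ℝ) + 1) * ‖f j‖) : Summable f := by
  obtain ⟨n₀, hn₀⟩ := exists_nat_ge (2 * M)
  refine summable_of_ratio_norm_eventually_le (r := 1 / 2) (by norm_num) ?_
  filter_upwards [eventually_ge_atTop n₀] with j hj
  have hM : M / ((j : ℝ) + 1) ≤ 1 / 2 := by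
    rw [div_le_iff₀ (by positivity)]
    have : (n₀ : ℝ) ≤ j := by exact_mod_cast hj
    linarith
  exact (h j).trans (mul_le_mul_of_nonneg_right hM (norm_nonneg _))

theorem summable_mul_pow_of_summable_abs_mul_pow {a : ℕ → ℝ}
    (ha : ∀ R : ℝ, Summable fun j : ℕ => |a j| * R ^ j) (v : ℝ) :
    Summable fun j : ℕ => a j * v ^ j :=
  .of_norm <| by simpa [abs_mul, abs_pow] using ha |v|

section RatioBound

variable {a : ℕ → ℝ} {M : ℝ}

theorem summable_abs_mul_pow_of_abs_succ_le (h : ∀ j : ℕ, |a (j + 1)| ≤ M / ((j : ℝ) + 1) * |a j|)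
    (R : ℝ) : Summable fun j : ℕ => |a j| * R ^ j := by
  refine summable_of_norm_succ_le_div (M * |R|) fun j => ?_
  simp only [Real.norm_eq_abs, abs_mul, abs_abs, abs_pow, pow_succ]
  calc |a (j + 1)| * (|R| ^ j * |R|) ≤ M / ((j : ℝ) + 1) * |a j| * (|R| ^ j * |R|) :=
        mul_le_mul_of_nonneg_right (h j) (by positivity)
    _ = M * |R| / ((j : ℝ) + 1) * (|a j| * |R| ^ j) := by ring

theorem summable_mul_pow_of_abs_succ_le (h : ∀ j : ℕ, |a (j + 1)| ≤ M / ((j : ℝ) + 1) * |a j|)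
    (v : ℝ) : Summable fun j : ℕ => a j * v ^ j :=
  summable_mul_pow_of_summable_abs_mul_pow (summable_abs_mul_pow_of_abs_succ_le h) v

theorem abs_derivCoeff_succ_le (h : ∀ j : ℕ, |a (j + 1)| ≤ M / ((j : ℝ) + 1) * |a j|) (j : ℕ) :
    |derivCoeff a (j + 1)| ≤ M / ((j : ℝ) + 1) * |derivCoeff a j| := by
  have hj : (0 : ℝ) < (j : ℝ) + 1 := by positivity
  have hj' : (0 : ℝ) < (j : ℝ) + 1 + 1 := by positivity
  simp only [derivCoeff, abs_mul, abs_of_pos hj, abs_of_pos hj', Nat.cast_succ]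
  calc ((j : ℝ) + 1 + 1) * |a (j + 1 + 1)|
      ≤ ((j : ℝ) + 1 + 1) * (M / ((j : ℝ) + 1 + 1) * |a (j + 1)|) := by
        gcongr; exact_mod_cast h (j + 1)
    _ = M / ((j : ℝ) + 1) * (((j : ℝ) + 1) * |a (j + 1)|) := by field_simp

end RatioBound

theorem hasDerivAt_powSeries {a : ℕ → ℝ}
    (ha : ∀ R : ℝ, Summable fun j : ℕ => |derivCoeff a j| * R ^ j) (u : ℝ) :
    HasDerivAt (powSeries a) (powSeries (derivCoeff a) u) u := by
  set R : ℝ := |u| + 1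
  have hR : 0 < R := by positivity
  set w : ℕ → ℝ := fun n => (n : ℝ) * |a n| * R ^ (n - 1)
  have hw : Summable w := by
    refine (summable_nat_add_iff 1).1 ((ha R).congr fun j => ?_)
    simp [w, derivCoeff, abs_mul, abs_of_pos (by positivity : (0 : ℝ) < (j : ℝ) + 1)]
  have hu : u ∈ Ioo (-R) R := abs_lt.1 (by simp [R])
  have htsum := hasDerivAt_tsum_of_isPreconnected hw isOpen_Ioo isPreconnected_Ioo
    (g := fun n y => a n * y ^ n) (g' := fun n y => a n * ((n : ℝ) * y ^ (n - 1)))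
    (fun n y _ => (hasDerivAt_pow n y).const_mul (a n))
    (fun n y hy => by
      have hyR : |y| ≤ R := (abs_lt.2 hy).le
      calc ‖a n * ((n : ℝ) * y ^ (n - 1))‖ = (n : ℝ) * |a n| * |y| ^ (n - 1) := by
            simp only [norm_mul, Real.norm_eq_abs, abs_pow, Nat.abs_cast]; ring
        _ ≤ (n : ℝ) * |a n| * R ^ (n - 1) := by gcongr)
    (y₀ := 0) (by simp [hR]) (summable_of_ne_finset_zero (s := {0}) fun n hn => by
      simp [zero_pow (Finset.mem_singleton.not.1 hn)]) hu
  refine htsum.congr_deriv ?_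
  rw [tsum_eq_zero_add']
  · simp [powSeries, derivCoeff, mul_comm, mul_left_comm]
  · simpa [derivCoeff, mul_assoc, mul_comm, mul_left_comm]
      using summable_mul_pow_of_summable_abs_mul_pow ha u

theorem powSeries_ode_of_rec {a : ℕ → ℝ} {ν c v : ℝ}
    (hrec : ∀ j : ℕ, ((j : ℝ) + 1) * ((j : ℝ) + ν + 1) * a (j + 1) = c * a j)
    (h₀ : Summable fun j : ℕ => a j * v ^ j)
    (h₁ : Summable fun j : ℕ => derivCoeff a j * v ^ j)
    (h₂ : Summable fun j : ℕ => derivCoeff (derivCoeff a) j * v ^ j) :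
    v * powSeries (derivCoeff (derivCoeff a)) v + (ν + 1) * powSeries (derivCoeff a) v =
      c * powSeries a v := by
  have hshift : HasSum (fun j : ℕ => ((j + 1 : ℕ) : ℝ) * derivCoeff a (j + 1) * v ^ (j + 1))
      (v * powSeries (derivCoeff (derivCoeff a)) v) := by
    have h := h₂.hasSum.mul_left v
    rwa [show (fun j : ℕ => v * (derivCoeff (derivCoeff a) j * v ^ j)) =
        fun j : ℕ => ((j + 1 : ℕ) : ℝ) * derivCoeff a (j + 1) * v ^ (j + 1) by
      ext j; simp only [derivCoeff, Nat.cast_succ]; ring] at h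
  have hv : HasSum (fun j : ℕ => (j : ℝ) * derivCoeff a j * v ^ j)
      (v * powSeries (derivCoeff (derivCoeff a)) v) :=
    (hasSum_nat_add_iff' 1).1 (by simpa using hshift)
  have hterm : (fun j : ℕ => (j : ℝ) * derivCoeff a j * v ^ j + (ν + 1) * (derivCoeff a j * v ^ j))
      = fun j : ℕ => c * (a j * v ^ j) := by
    ext j
    simp only [derivCoeff]
    linear_combination v ^ j * hrec j
  have hsum := hv.add (h₁.hasSum.mul_left (ν + 1))
  rw [hterm] at hsum
  exact hsum.unique (h₀.hasSum.mul_left c)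

open Nat in
noncomputable def besselCoeff (ν c : ℝ) (j : ℕ) : ℝ :=
  Real.Gamma (ν + 1) * c ^ j / (j ! * Real.Gamma ((j : ℝ) + ν + 1))

theorem besselCoeff_succ {ν : ℝ} (hν : -1 < ν) (c : ℝ) (j : ℕ) :
    ((j : ℝ) + 1) * ((j : ℝ) + ν + 1) * besselCoeff ν c (j + 1) = c * besselCoeff ν c j := by
  have hpos : 0 < (j : ℝ) + ν + 1 := by linarith [(Nat.cast_nonneg j : (0 : ℝ) ≤ j)]
  have hΓ : Real.Gamma ((j : ℝ) + 1 + ν + 1) =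
      ((j : ℝ) + ν + 1) * Real.Gamma ((j : ℝ) + ν + 1) := by
    rw [← Real.Gamma_add_one hpos.ne', add_right_comm _ 1 ν]
  have := (Real.Gamma_pos_of_pos hpos).ne'
  simp only [besselCoeff, Nat.factorial_succ, Nat.cast_mul, Nat.cast_succ, pow_succ, hΓ]
  field_simp

theorem abs_besselCoeff_succ_le {ν : ℝ} (hν : -1 < ν) (c : ℝ) (j : ℕ) :
    |besselCoeff ν c (j + 1)| ≤ |c| / (ν + 1) / ((j : ℝ) + 1) * |besselCoeff ν c j| := by
  have hj : (0 : ℝ) ≤ j := Nat.cast_nonneg j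
  have hν' : 0 < ν + 1 := by linarith
  have hrec := congrArg abs (besselCoeff_succ hν c j)
  rw [abs_mul, abs_mul, abs_mul, abs_of_pos (by positivity : (0 : ℝ) < (j : ℝ) + 1),
    abs_of_pos (by linarith : (0 : ℝ) < (j : ℝ) + ν + 1)] at hrec
  rw [div_div, div_mul_eq_mul_div, le_div_iff₀ (by positivity), ← hrec]
  calc |besselCoeff ν c (j + 1)| * ((ν + 1) * ((j : ℝ) + 1))
      ≤ |besselCoeff ν c (j + 1)| * (((j : ℝ) + 1) * ((j : ℝ) + ν + 1)) :=
        mul_le_mul_of_nonneg_left (by nlinarith) (abs_nonneg _)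
    _ = _ := by ring

theorem besselJ_two_mul (ν : ℝ) {z : ℝ} (hz : 0 < z) :
    Real.Gamma (ν + 1) * besselJ ν (2 * z) = z ^ ν * powSeries (besselCoeff ν (-1)) (z ^ 2) := by
  simp only [besselJ, powSeries, ← tsum_mul_left]
  refine tsum_congr fun j => ?_
  rw [mul_div_cancel_left₀ z two_ne_zero, Real.rpow_add hz, Real.rpow_mul hz.le, Real.rpow_two,
    Real.rpow_natCast, Real.Gamma_nat_eq_factorial, besselCoeff]
  ring

theorem powSeries_besselCoeff_mul (ν c k w : ℝ) :
    powSeries (besselCoeff ν c) (k * w) = powSeries (besselCoeff ν (c * k)) w := by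
  refine tsum_congr fun j => ?_
  simp only [besselCoeff, mul_pow]
  ring

theorem rpow_neg_mul_sqrt_mul_besselJ {ν t : ℝ} (hν : 0 < ν) (ht : 0 < t) :
    ν ^ (-ν) * Real.Gamma (ν + 1) * √t * besselJ ν (2 * ν * t ^ (-(1 / (2 * ν)))) =
      powSeries (besselCoeff ν (-1)) (ν ^ 2 * t ^ (-(1 / ν))) := by
  set z := ν * t ^ (-(1 / (2 * ν))) with hz
  have hz0 : 0 < z := by positivity
  have hzν : z ^ ν = ν ^ ν * t ^ (-(1 / 2 : ℝ)) := by
    rw [hz, Real.mul_rpow hν.le (by positivity), ← Real.rpow_mul ht.le]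
    congr 2
    field_simp
  have hz2 : z ^ 2 = ν ^ 2 * t ^ (-(1 / ν)) := by
    rw [hz, mul_pow, ← Real.rpow_mul_natCast ht.le]
    congr 2
    push_cast
    field_simp
  have hunit : ν ^ (-ν) * √t * z ^ ν = 1 := by
    rw [hzν, Real.sqrt_eq_rpow, Real.rpow_neg hν.le, Real.rpow_neg ht.le]
    field_simp
  rw [mul_assoc 2 ν, ← hz, ← hz2, mul_right_comm _ _ √t, mul_assoc _ (Real.Gamma _),
    besselJ_two_mul ν hz0, ← mul_assoc, hunit, one_mul]

theorem alphaFun_mul_rpow_neg {N : ℕ} (hN : 3 ≤ N) {τ r : ℝ} (hτ : 0 < τ) (hr : 0 < r) :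
    alphaFun N (τ * r ^ (-((N : ℝ) - 2))) = powSeries
      (besselCoeff (((N : ℝ) - 2) / 2) (-(((N : ℝ) - 2) ^ 2 * τ ^ (-(2 / ((N : ℝ) - 2))) / 4)))
      (r ^ 2) := by
  have hN' : (3 : ℝ) ≤ N := by exact_mod_cast hN
  have hν : 0 < ((N : ℝ) - 2) / 2 := by linarith
  have hN2 : (N : ℝ) - 2 ≠ 0 := by linarith
  have hpow : (τ * r ^ (-((N : ℝ) - 2))) ^ (-(1 / (((N : ℝ) - 2) / 2))) =
      τ ^ (-(2 / ((N : ℝ) - 2))) * r ^ 2 := by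
    rw [Real.mul_rpow hτ.le (by positivity), ← Real.rpow_mul hr.le, ← Real.rpow_natCast]
    congr 2
    · field_simp
    · field_simp; norm_num
  rw [alphaFun, rpow_neg_mul_sqrt_mul_besselJ hν (by positivity), hpow, ← mul_assoc,
    powSeries_besselCoeff_mul]
  congr 2
  ring

theorem iteratedDeriv_two_comp_quadratic {G G' G'' : ℝ → ℝ}
    (hG : ∀ v, HasDerivAt G (G' v) v) (hG' : ∀ v, HasDerivAt G' (G'' v) v) (b c : ℝ) :
    iteratedDeriv 2 (fun s : ℝ => G (c + b * s + s ^ 2)) 0 = b ^ 2 * G'' c + 2 * G' c := by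
  have hq : ∀ s : ℝ, HasDerivAt (fun s : ℝ => c + b * s + s ^ 2) (b + 2 * s) s := fun s =>
    ((((hasDerivAt_id s).const_mul b).const_add c).add (hasDerivAt_pow 2 s)).congr_deriv
      (by simp)
  have hl : HasDerivAt (fun s : ℝ => b + 2 * s) 2 0 := by
    simpa using ((hasDerivAt_id (0 : ℝ)).const_mul 2).const_add b
  have hd : deriv (fun s : ℝ => G (c + b * s + s ^ 2)) =
      fun s : ℝ => G' (c + b * s + s ^ 2) * (b + 2 * s) :=
    funext fun s => ((hG _).comp s (hq s)).deriv
  have hd2 : HasDerivAt (fun s : ℝ => G' (c + b * s + s ^ 2) * (b + 2 * s))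
      (G'' c * b * b + G' c * 2) 0 :=
    (((hG' _).comp 0 (hq 0)).mul hl).congr_deriv (by simp)
  rw [iteratedDeriv_succ, iteratedDeriv_one, hd, hd2.deriv]
  ring

theorem norm_add_smul_single_sq {ι : Type*} [Fintype ι] [DecidableEq ι]
    (x : EuclideanSpace ℝ ι) (i : ι) (s : ℝ) :
    ‖x + s • EuclideanSpace.single i 1‖ ^ 2 = ‖x‖ ^ 2 + 2 * x i * s + s ^ 2 := by
  rw [norm_add_sq_real, real_inner_smul_right, EuclideanSpace.inner_single_right, norm_smul]
  simp
  ring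

theorem lap_comp_norm_sq {N : ℕ} {G G' G'' : ℝ → ℝ}
    (hG : ∀ v, HasDerivAt G (G' v) v) (hG' : ∀ v, HasDerivAt G' (G'' v) v)
    (x : EuclideanSpace ℝ (Fin N)) :
    lap (fun y => G (‖y‖ ^ 2)) x = 4 * ‖x‖ ^ 2 * G'' (‖x‖ ^ 2) + 2 * N * G' (‖x‖ ^ 2) := by
  have hsq : ∑ i, (2 * x i) ^ 2 = 4 * ‖x‖ ^ 2 := by
    simp only [mul_pow, ← Finset.mul_sum, EuclideanSpace.real_norm_sq_eq]
    norm_num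
  simp only [lap, norm_add_smul_single_sq, iteratedDeriv_two_comp_quadratic hG hG',
    Finset.sum_add_distrib, ← Finset.sum_mul, hsq, Finset.sum_const, Finset.card_univ,
    Fintype.card_fin, nsmul_eq_mul]
  ring

theorem lap_congr {N : ℕ} {f g : EuclideanSpace ℝ (Fin N) → ℝ} {x : EuclideanSpace ℝ (Fin N)}
    (h : f =ᶠ[𝓝 x] g) : lap f x = lap g x := by
  refine Finset.sum_congr rfl fun i _ => Filter.EventuallyEq.iteratedDeriv_eq 2 ?_
  have hc : Continuous fun s : ℝ => x + s • EuclideanSpace.single i (1 : ℝ) := by fun_prop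
  have ht : Tendsto (fun s : ℝ => x + s • EuclideanSpace.single i (1 : ℝ)) (𝓝 0) (𝓝 x) := by
    simpa using hc.tendsto 0
  exact ht.eventually h

theorem stmt3 (N : ℕ) (hN : 3 ≤ N) (τ : ℝ) (hτ : 0 < τ) (hzero : alphaFun N τ = 0)
    (φ : EuclideanSpace ℝ (Fin N) → ℝ)
    (hφ : ∀ x : EuclideanSpace ℝ (Fin N), φ x = alphaFun N (τ * ‖x‖ ^ (-((N : ℝ) - 2))))
    (μ : ℝ) (hμ : μ = ((N : ℝ) - 2) ^ 2 * τ ^ (-(2 / ((N : ℝ) - 2)))) :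
    (∀ x ∈ ball (0 : EuclideanSpace ℝ (Fin N)) 1 \ {0}, -lap φ x = μ * φ x) ∧
    (∀ x : EuclideanSpace ℝ (Fin N), ‖x‖ = 1 → φ x = 0) := by
  have hν : -1 < ((N : ℝ) - 2) / 2 := by
    have : (3 : ℝ) ≤ N := by exact_mod_cast hN
    linarith
  set a := besselCoeff (((N : ℝ) - 2) / 2) (-(μ / 4))
  have hM₀ := abs_besselCoeff_succ_le hν (-(μ / 4))
  have hM₁ := abs_derivCoeff_succ_le hM₀
  have hM₂ := abs_derivCoeff_succ_le hM₁
  have hφa : ∀ y, y ≠ 0 → φ y = powSeries a (‖y‖ ^ 2) := fun y hy => by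
    rw [hφ, alphaFun_mul_rpow_neg hN hτ (norm_pos_iff.2 hy), ← hμ]
  refine ⟨fun x hx => ?_, fun x hx => by rw [hφ, hx, one_rpow, mul_one, hzero]⟩
  have hx0 : x ≠ 0 := hx.2
  have hode := powSeries_ode_of_rec (besselCoeff_succ hν _) (summable_mul_pow_of_abs_succ_le hM₀ _)
    (summable_mul_pow_of_abs_succ_le hM₁ _) (summable_mul_pow_of_abs_succ_le hM₂ (‖x‖ ^ 2))
  rw [lap_congr ((eventually_ne_nhds hx0).mono hφa),
    lap_comp_norm_sq (hasDerivAt_powSeries (summable_abs_mul_pow_of_abs_succ_le hM₁))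
      (hasDerivAt_powSeries (summable_abs_mul_pow_of_abs_succ_le hM₂)), hφa x hx0]
  linear_combination (-4) * hode
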